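/- arXiv:1806.06925 — 2 statements merged into one kernel-verified Lean document; each statement's English description precedes it below -/
import Mathlib

section
/- For all n ≥ 2, the expected length of a uniformly chosen path between two distinct vertices in a uniformly chosen plane tree on n vertices equals (2n-2)!!/(2·(2n-3)!!); that is, ((n-1)·4^(n-2)) / (binom(n,2)·(1/n)·binom(2n-2,n-1)) = (2n-2)!!/(2·(2n-3)!!). -/
theorem expected_path_length_plane_trees (n : ℕ) (hn : 2 ≤ n) :
    ((n - 1 : ℚ) * 4 ^ (n - 2)) /
        ((n.choose 2 : ℚ) * ((1 / (n : ℚ)) * ((2 * n - 2).choose (n - 1) : ℚ)))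
      = (Nat.doubleFactorial (2 * n - 2) : ℚ) /
        (2 * (Nat.doubleFactorial (2 * n - 3) : ℚ)) := by
  obtain ⟨m, rfl⟩ : ∃ m, n = m + 2 := ⟨n - 2, by omega⟩
  have h1 : 2 * (m + 2) - 2 = 2 * (m + 1) := by omega
  have h2 : 2 * (m + 2) - 3 = 2 * m + 1 := by omega
  have h3 : m + 2 - 1 = m + 1 := by omega
  have h4 : m + 2 - 2 = m := by omega
  rw [h1, h2, h3, h4]
  -- abbreviations (as rationals)
  set a : ℚ := (Nat.factorial (m + 1) : ℚ) with ha
  set c : ℚ := ((2 * (m + 1)).choose (m + 1) : ℚ) with hc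
  set d : ℚ := (Nat.doubleFactorial (2 * m + 1) : ℚ) with hd
  set D : ℚ := (Nat.doubleFactorial (2 * (m + 1)) : ℚ) with hD
  set c2 : ℚ := ((m + 2).choose 2 : ℚ) with hc2'
  have hdfq : D = 2 ^ (m + 1) * a := by
    rw [hD, ha]; exact_mod_cast congrArg (Nat.cast : ℕ → ℚ) (Nat.doubleFactorial_two_mul (m + 1))
  have hodd : Nat.factorial (2 * (m + 1))
      = Nat.doubleFactorial (2 * (m + 1)) * Nat.doubleFactorial (2 * m + 1) := by
    have e : 2 * m + 1 + 1 = 2 * (m + 1) := by omega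
    have := Nat.factorial_eq_mul_doubleFactorial (2 * m + 1)
    rwa [e] at this
  have hle : m + 1 ≤ 2 * (m + 1) := by omega
  have hch : (2 * (m + 1)).choose (m + 1) * Nat.factorial (m + 1) * Nat.factorial (m + 1)
      = Nat.factorial (2 * (m + 1)) := by
    have := Nat.choose_mul_factorial_mul_factorial hle
    have h : 2 * (m + 1) - (m + 1) = m + 1 := by omega
    rwa [h] at this
  have hcq : c * a * a = D * d := by
    rw [hc, ha, hD, hd]
    exact_mod_cast congrArg (Nat.cast : ℕ → ℚ) (hch.trans hodd)
  have hf1 : a ≠ 0 := by rw [ha]; positivity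
  have hk : c * a = 2 ^ (m + 1) * d := by
    apply mul_right_cancel₀ hf1
    rw [hcq, hdfq]; ring
  -- choose 2
  have hc2nat : (m + 2).choose 2 * 2 * m.factorial = (m + 2) * ((m + 1) * m.factorial) := by
    have h5 := Nat.choose_mul_factorial_mul_factorial (show 2 ≤ m + 2 by omega)
    have e : m + 2 - 2 = m := by omega
    rw [e] at h5
    have e2 : Nat.factorial 2 = 2 := rfl
    rw [e2] at h5
    rw [h5, Nat.factorial_succ, Nat.factorial_succ]
  have hfm : (Nat.factorial m : ℚ) ≠ 0 := by positivity
  have hc2q : c2 * 2 = ((m : ℚ) + 2) * ((m : ℚ) + 1) := by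
    apply mul_right_cancel₀ hfm
    have := congrArg (Nat.cast : ℕ → ℚ) hc2nat
    push_cast at this
    rw [hc2']
    linear_combination this
  -- nonzero facts
  have hdo : d ≠ 0 := by rw [hd]; positivity
  have hch0 : c ≠ 0 := by
    rw [hc]; exact_mod_cast Nat.cast_ne_zero.mpr (Nat.choose_pos hle).ne'
  have hc20 : c2 ≠ 0 := by
    rw [hc2']; exact_mod_cast Nat.cast_ne_zero.mpr (Nat.choose_pos (by omega : 2 ≤ m + 2)).ne'
  have hm2 : ((m : ℚ) + 2) ≠ 0 := by positivity
  have hm2' : ((m + 2 : ℕ) : ℚ) = (m : ℚ) + 2 := by push_cast; ring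
  have h4m : (4 : ℚ) ^ m = 2 ^ m * 2 ^ m := by rw [← mul_pow]; norm_num
  rw [hm2']
  rw [div_eq_div_iff (by
        apply mul_ne_zero hc20
        exact mul_ne_zero (by simp [hm2]) hch0)
      (mul_ne_zero two_ne_zero hdo)]
  have hsimp : D * (c2 * (1 / ((m : ℚ) + 2) * c)) = D * c2 * c / ((m : ℚ) + 2) := by ring
  rw [hsimp, eq_div_iff hm2, hdfq, h4m]
  linear_combination (-2 * 2 ^ m * c2) * hk + (-2 * (2 ^ m * 2 ^ m) * d) * hc2q
end

section
/- The bivariate generating function P(x,y) = Σ p_{n,k} xⁿ yᵏ, where p_{n,k} is the number of root-to-leaf paths with k edges in binary trees on n vertices, satisfies P(x,y) = x + 2xy·P(x,y) + 2xy·P(x,y)·T(x), where T(x) = (1 − 2x − √(1-4x))/(2x); consequently P(x,y) = x/(1 − y + y√(1-4x)). -/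
/-- Binary trees: every vertex has zero, one, or two children, where a
single child is distinguished as a left child or a right child. -/
inductive BTree : Type where
  | leaf : BTree
  | left : BTree → BTree
  | right : BTree → BTree
  | both : BTree → BTree → BTree

namespace BTree

/-- number of vertices -/
def size : BTree → ℕ
  | .leaf => 1
  | .left t => 1 + size t
  | .right t => 1 + size t
  | .both l r => 1 + size l + size r

/-- the list of depths (numbers of edges from the root) of the leaves -/
def leafDepths : BTree → List ℕ
  | .leaf => [0]
  | .left t => (leafDepths t).map (· + 1)
  | .right t => (leafDepths t).map (· + 1)
  | .both l r => (leafDepths l).map (· + 1) ++ (leafDepths r).map (· + 1)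

end BTree

/-- `p n k` is the number of root-to-leaf paths with `k` edges in binary trees
on `n` vertices. -/
noncomputable def p (n k : ℕ) : ℕ :=
  ∑ᶠ T : {T : BTree // T.size = n}, (T.1.leafDepths).count k

/-- The bivariate generating function `P(x,y) = Σ p_{n,k} xⁿ yᵏ`. -/
noncomputable def P (x y : ℝ) : ℝ :=
  ∑' n : ℕ, ∑' k : ℕ, (p n k : ℝ) * x ^ n * y ^ k

/-!
A tree is a leaf, or a root carrying a left subtree, a right subtree, or both, and the leaves
of a subtree lie one edge deeper in the whole tree. Weighting a tree by `x ^ size` times the sum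
of `y ^ depth` over its leaves, this decomposition gives `P = x + 2xyP + 2xyPT` with
`T = ∑ x ^ size`, and without the leaf weights it gives `T = x(1 + T)²`. Of the two roots of
this quadratic, `T` is the one that is at most `1`: the sums over trees of height `< k` satisfy
`Tₖ₊₁ = x(1 + Tₖ)²`, so they stay below `1` when `x ≤ 1/4`. That root is
`(1 - 2x - √(1 - 4x))/(2x)`. All series converge absolutely for `0 ≤ x < 1/4` and `|y| ≤ 1`,
because preorder encoding embeds the trees on `n` vertices into the words of length `n` over a
four-letter alphabet.
-/

theorem eq_of_le_one_of_eq_mul_one_add_sq {x s : ℝ} (hx0 : 0 < x) (hx : x < 1 / 4)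
    (hs_le : s ≤ 1) (hs : s = x * (1 + s) ^ 2) :
    s = (1 - 2 * x - Real.sqrt (1 - 4 * x)) / (2 * x) := by
  have hsq : (1 - 2 * x - 2 * x * s) ^ 2 = Real.sqrt (1 - 4 * x) ^ 2 := by
    rw [Real.sq_sqrt (by linarith)]
    linear_combination (-4 * x) * hs
  -- `s ≤ 1` selects the smaller root: it makes `1 - 2 * x - 2 * x * s` nonnegative.
  have hroot : 0 ≤ 1 - 2 * x - 2 * x * s := by nlinarith
  have := (pow_left_inj₀ hroot (Real.sqrt_nonneg _) two_ne_zero).1 hsq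
  rw [eq_div_iff (by positivity)]
  linarith

theorem List.sum_map_pow_map_succ {R : Type*} [Semiring R] (y : R) (l : List ℕ) :
    ((l.map (· + 1)).map (y ^ ·)).sum = y * (l.map (y ^ ·)).sum := by
  simp [Function.comp_def, pow_succ', List.sum_map_mul_left]

theorem List.hasSum_count_mul_pow {R : Type*} [Semiring R] [TopologicalSpace R] (l : List ℕ)
    (y : R) : HasSum (fun k => (l.count k : R) * y ^ k) (l.map (y ^ ·)).sum := by
  classical
  rw [Finset.sum_list_map_count]
  simp only [nsmul_eq_mul]
  exact hasSum_sum_of_ne_finset_zero fun k hk => by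
    simp [List.count_eq_zero_of_not_mem (by simpa using hk)]

namespace BTree

theorem size_pos (T : BTree) : 0 < T.size := by
  cases T <;> simp only [size] <;> omega

def height : BTree → ℕ
  | .leaf => 0
  | .left t => height t + 1
  | .right t => height t + 1
  | .both l r => max (height l) (height r) + 1

def encode : BTree → List (Fin 4)
  | .leaf => [0]
  | .left t => 1 :: encode t
  | .right t => 2 :: encode t
  | .both l r => 3 :: (encode l ++ encode r)

theorem length_encode (T : BTree) : (encode T).length = T.size := by
  induction T with
  | leaf => rfl
  | left t ih | right t ih => simp [encode, size, ih, Nat.add_comm]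
  | both l r ihl ihr => simp [encode, size, ihl, ihr]; ring

theorem encode_append_inj {T₁ T₂ : BTree} {s₁ s₂ : List (Fin 4)}
    (h : encode T₁ ++ s₁ = encode T₂ ++ s₂) : T₁ = T₂ ∧ s₁ = s₂ := by
  induction T₁ generalizing T₂ s₁ s₂ with
  | leaf => cases T₂ <;> simp_all [encode]
  | left t ih | right t ih =>
    cases T₂ <;> simp [encode] at h ⊢
    exact ih h
  | both l r ihl ihr =>
    cases T₂ <;> simp [encode] at h ⊢
    obtain ⟨rfl, hrest⟩ := ihl h
    simpa using ihr hrest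

theorem encode_injective : Function.Injective encode := fun _ _ h =>
  (encode_append_inj (s₁ := []) (s₂ := []) (by simpa using h)).1

def encodeOfSizeEq (n : ℕ) (T : {T : BTree // T.size = n}) : List.Vector (Fin 4) n :=
  ⟨encode T, by rw [length_encode, T.2]⟩

theorem encodeOfSizeEq_injective (n : ℕ) : Function.Injective (encodeOfSizeEq n) :=
  fun _ _ h => Subtype.ext (encode_injective (congrArg Subtype.val h))

instance (n : ℕ) : Finite {T : BTree // T.size = n} :=
  .of_injective _ (encodeOfSizeEq_injective n)

noncomputable instance (n : ℕ) : Fintype {T : BTree // T.size = n} := .ofFinite _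

theorem card_size_eq_le (n : ℕ) : Nat.card {T : BTree // T.size = n} ≤ 4 ^ n := by
  simpa [Nat.card_eq_fintype_card, card_vector] using
    Nat.card_le_card_of_injective _ (encodeOfSizeEq_injective n)

def equivSum : Unit ⊕ BTree ⊕ BTree ⊕ (BTree × BTree) ≃ BTree where
  toFun := Sum.elim (fun _ => leaf) (Sum.elim left (Sum.elim right fun q => both q.1 q.2))
  invFun
    | leaf => .inl ()
    | left t => .inr (.inl t)
    | right t => .inr (.inr (.inl t))
    | both l r => .inr (.inr (.inr (l, r)))
  left_inv := by rintro (_ | t | t | ⟨l, r⟩) <;> rfl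
  right_inv := by rintro (_ | t | t | ⟨l, r⟩) <;> rfl

theorem tsum_eq_leaf_add {E : Type*} [NormedAddCommGroup E] [CompleteSpace E] {f : BTree → E}
    (hf : Summable f) :
    ∑' T, f T = f leaf + ∑' t, f (left t) + ∑' t, f (right t)
      + ∑' q : BTree × BTree, f (both q.1 q.2) := by
  rw [add_assoc, add_assoc]
  refine (equivSum.hasSum_iff.1 (.sum ?_ (.sum ?_ (.sum ?_ ?_)))).tsum_eq
  · exact hasSum_unique (f ∘ equivSum ∘ Sum.inl)
  · exact (hf.comp_injective fun _ _ => left.inj).hasSum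
  · exact (hf.comp_injective fun _ _ => right.inj).hasSum
  · exact (hf.comp_injective fun _ _ h => Prod.ext (both.inj h).1 (both.inj h).2).hasSum

theorem summable_size_mul_pow_size {x : ℝ} (hx0 : 0 ≤ x) (hx : x < 1 / 4) :
    Summable fun T : BTree => (T.size : ℝ) * x ^ T.size := by
  have hnonneg (T : BTree) : 0 ≤ (T.size : ℝ) * x ^ T.size := by positivity
  refine (Equiv.sigmaFiberEquiv size).summable_iff.1 <|
    (summable_sigma_of_nonneg fun _ => hnonneg _).2 ⟨fun _ => .of_finite, ?_⟩
  have hgeom : Summable fun n : ℕ => (n : ℝ) ^ 1 * (4 * x) ^ n :=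
    summable_pow_mul_geometric_of_norm_lt_one 1 <| by
      rw [Real.norm_eq_abs, abs_of_nonneg (by positivity)]; linarith
  refine .of_nonneg_of_le (fun n => tsum_nonneg fun _ => hnonneg _) (fun n => ?_) hgeom
  calc ∑' T : {T : BTree // T.size = n}, (T.1.size : ℝ) * x ^ T.1.size
      = ∑' _ : {T : BTree // T.size = n}, (n : ℝ) * x ^ n := tsum_congr fun T => by rw [T.2]
    _ = Nat.card {T : BTree // T.size = n} * ((n : ℝ) * x ^ n) := by rw [tsum_const, nsmul_eq_mul]
    _ ≤ 4 ^ n * ((n : ℝ) * x ^ n) := by gcongr; exact_mod_cast card_size_eq_le n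
    _ = (n : ℝ) ^ 1 * (4 * x) ^ n := by ring

theorem summable_pow_size {x : ℝ} (hx0 : 0 ≤ x) (hx : x < 1 / 4) :
    Summable fun T : BTree => x ^ T.size :=
  (summable_size_mul_pow_size hx0 hx).of_nonneg_of_le (fun _ => by positivity) fun T =>
    le_mul_of_one_le_left (by positivity) (by exact_mod_cast T.size_pos)

theorem tsum_eq_mul_one_add_tsum_sq {f g : BTree → ℝ} (x : ℝ) (hf : Summable f)
    (hg : Summable g) (h_leaf : g leaf = x) (h_left : ∀ t, g (left t) = x * f t)
    (h_right : ∀ t, g (right t) = x * f t)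
    (h_both : ∀ l r, g (both l r) = x * (f l * f r)) :
    ∑' T, g T = x * (1 + ∑' T, f T) ^ 2 := by
  rw [tsum_eq_leaf_add hg, h_leaf, tsum_congr h_left, tsum_congr h_right,
    tsum_congr fun q : BTree × BTree => h_both q.1 q.2, tsum_mul_left, tsum_mul_left,
    ← tsum_mul_tsum_of_summable_norm hf.norm hf.norm]
  ring

noncomputable def truncatedPowSize (x : ℝ) (k : ℕ) : BTree → ℝ :=
  {T | T.height < k}.indicator (x ^ size ·)

theorem summable_truncatedPowSize {x : ℝ} (hx0 : 0 ≤ x) (hx : x < 1 / 4) (k : ℕ) :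
    Summable (truncatedPowSize x k) :=
  (summable_pow_size hx0 hx).indicator _

theorem tsum_truncatedPowSize_succ {x : ℝ} (hx0 : 0 ≤ x) (hx : x < 1 / 4) (k : ℕ) :
    ∑' T, truncatedPowSize x (k + 1) T = x * (1 + ∑' T, truncatedPowSize x k T) ^ 2 := by
  apply tsum_eq_mul_one_add_tsum_sq x (summable_truncatedPowSize hx0 hx k)
    (summable_truncatedPowSize hx0 hx (k + 1))
  all_goals
    intros
    simp only [truncatedPowSize, Set.indicator_apply, Set.mem_ofPred_eq, height, size,
      Nat.add_lt_add_iff_right, max_lt_iff]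
    split_ifs <;> simp_all [pow_succ', pow_add, mul_assoc]

theorem tsum_pow_size_le_one {x : ℝ} (hx0 : 0 ≤ x) (hx : x < 1 / 4) :
    ∑' T : BTree, x ^ T.size ≤ 1 := by
  have hnonneg (k : ℕ) : 0 ≤ truncatedPowSize x k :=
    Set.indicator_nonneg fun _ _ => by positivity
  have hbound (k : ℕ) : ∑' T, truncatedPowSize x k T ≤ 1 := by
    induction k with
    | zero => simp [truncatedPowSize]
    | succ k ih =>
      rw [tsum_truncatedPowSize_succ hx0 hx]
      have : 0 ≤ ∑' T, truncatedPowSize x k T := tsum_nonneg (hnonneg k)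
      nlinarith
  refine Real.tsum_le_of_sum_le (fun _ => by positivity) fun F => ?_
  calc ∑ T ∈ F, x ^ T.size = ∑ T ∈ F, truncatedPowSize x (F.sup height + 1) T :=
        Finset.sum_congr rfl fun T hT =>
          (Set.indicator_of_mem (s := {T : BTree | T.height < F.sup height + 1})
            (Nat.lt_succ_of_le (Finset.le_sup hT)) (x ^ size ·)).symm
    _ ≤ ∑' T, truncatedPowSize x (F.sup height + 1) T :=
        (summable_truncatedPowSize hx0 hx _).sum_le_tsum F fun T _ => hnonneg _ T
    _ ≤ 1 := hbound _

theorem tsum_pow_size {x : ℝ} (hx0 : 0 < x) (hx : x < 1 / 4) :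
    ∑' T : BTree, x ^ T.size = (1 - 2 * x - Real.sqrt (1 - 4 * x)) / (2 * x) := by
  have hS := summable_pow_size hx0.le hx
  refine eq_of_le_one_of_eq_mul_one_add_sq hx0 hx (tsum_pow_size_le_one hx0.le hx) ?_
  refine tsum_eq_mul_one_add_tsum_sq x hS hS ?_ ?_ ?_ ?_ <;> intros <;>
    (simp only [size]; ring)

def leafWeight {R : Type*} [Semiring R] (y : R) (T : BTree) : R :=
  (T.leafDepths.map (y ^ ·)).sum

section LeafWeight

variable {R : Type*} [Semiring R] (y : R)

@[simp] theorem leafWeight_leaf : leafWeight y leaf = 1 := by simp [leafWeight, leafDepths]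

@[simp] theorem leafWeight_left (t : BTree) : leafWeight y (left t) = y * leafWeight y t :=
  List.sum_map_pow_map_succ y _

@[simp] theorem leafWeight_right (t : BTree) : leafWeight y (right t) = y * leafWeight y t :=
  List.sum_map_pow_map_succ y _

@[simp] theorem leafWeight_both (l r : BTree) :
    leafWeight y (both l r) = y * leafWeight y l + y * leafWeight y r := by
  simp only [leafWeight, leafDepths, List.map_append, List.sum_append, List.sum_map_pow_map_succ]

end LeafWeight

theorem abs_leafWeight_le {y : ℝ} (hy : |y| ≤ 1) (T : BTree) : |leafWeight y T| ≤ T.size := by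
  have hmul (a : ℝ) : |y * a| ≤ |a| := by
    rw [abs_mul]; exact mul_le_of_le_one_left (abs_nonneg a) hy
  induction T with
  | leaf => simp [size]
  | left t ih | right t ih =>
    simp only [leafWeight_left, leafWeight_right, size]; push_cast
    linarith [hmul (leafWeight y t)]
  | both l r ihl ihr =>
    simp only [leafWeight_both, size]; push_cast
    linarith [abs_add_le (y * leafWeight y l) (y * leafWeight y r),
      hmul (leafWeight y l), hmul (leafWeight y r)]

theorem hasSum_p_mul_pow (x y : ℝ) (n : ℕ) :
    HasSum (fun k => (p n k : ℝ) * x ^ n * y ^ k)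
      (∑' T : {T : BTree // T.size = n}, x ^ n * leafWeight y T) := by
  have hp (k : ℕ) :
      (p n k : ℝ) = ∑ T : {T : BTree // T.size = n}, (T.1.leafDepths.count k : ℝ) := by
    rw [p, finsum_eq_sum_of_fintype]; push_cast; rfl
  simp only [hp, Finset.sum_mul, tsum_fintype]
  refine hasSum_sum fun T _ => ?_
  simp only [mul_comm _ (x ^ n), mul_assoc]
  exact (List.hasSum_count_mul_pow T.1.leafDepths y).mul_left (x ^ n)

theorem P_eq_tsum {x y : ℝ} (hw : Summable fun T : BTree => x ^ T.size * leafWeight y T) :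
    P x y = ∑' T : BTree, x ^ T.size * leafWeight y T := by
  rw [P, ← (hw.hasSum.tsum_fiberwise size).tsum_eq]
  exact tsum_congr fun n =>
    (hasSum_p_mul_pow x y n).tsum_eq.trans (tsum_congr fun T => by rw [T.2])

section Weighted

variable {x y : ℝ} (hx0 : 0 ≤ x) (hx : x < 1 / 4) (hy : |y| ≤ 1)
include hx0 hx hy

theorem summable_pow_size_mul_leafWeight :
    Summable fun T : BTree => x ^ T.size * leafWeight y T :=
  .of_norm_bounded (summable_size_mul_pow_size hx0 hx) fun T => by
    rw [Real.norm_eq_abs, abs_mul, abs_of_nonneg (by positivity), mul_comm]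
    exact mul_le_mul_of_nonneg_right (abs_leafWeight_le hy T) (by positivity)

theorem tsum_pow_size_mul_leafWeight :
    ∑' T : BTree, x ^ T.size * leafWeight y T
      = x + 2 * x * y * ∑' T : BTree, x ^ T.size * leafWeight y T
        + 2 * x * y * (∑' T : BTree, x ^ T.size * leafWeight y T) * ∑' T : BTree, x ^ T.size := by
  have hW := summable_pow_size_mul_leafWeight hx0 hx hy
  have hS := summable_pow_size hx0 hx
  have h_left (t : BTree) :
      x ^ (left t).size * leafWeight y (left t) = x * y * (x ^ t.size * leafWeight y t) := by
    simp only [size, leafWeight_left]; ring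
  have h_right (t : BTree) :
      x ^ (right t).size * leafWeight y (right t) = x * y * (x ^ t.size * leafWeight y t) := by
    simp only [size, leafWeight_right]; ring
  have h_both (q : BTree × BTree) :
      x ^ (both q.1 q.2).size * leafWeight y (both q.1 q.2)
        = x * y * ((x ^ q.1.size * leafWeight y q.1) * x ^ q.2.size)
          + x * y * (x ^ q.1.size * (x ^ q.2.size * leafWeight y q.2)) := by
    simp only [size, leafWeight_both]; ring
  conv_lhs =>
    rw [tsum_eq_leaf_add hW, tsum_congr h_left, tsum_congr h_right, tsum_congr h_both,
      ((summable_mul_of_summable_norm hW.norm hS.norm).mul_left _).tsum_add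
        ((summable_mul_of_summable_norm hS.norm hW.norm).mul_left _)]
    simp only [tsum_mul_left]
    rw [← tsum_mul_tsum_of_summable_norm hW.norm hS.norm,
      ← tsum_mul_tsum_of_summable_norm hS.norm hW.norm]
  simp only [size, leafWeight_leaf]
  ring

end Weighted

end BTree

open BTree in
theorem bivariate_gf_root_to_leaf_paths_binary_trees (x y : ℝ)
    (hx0 : 0 < x) (hx : x < 1 / 4) (hy : |y| ≤ 1) :
    P x y = x + 2 * x * y * P x y +
        2 * x * y * P x y * ((1 - 2 * x - Real.sqrt (1 - 4 * x)) / (2 * x)) ∧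
      P x y = x / (1 - y + y * Real.sqrt (1 - 4 * x)) := by
  have hP := P_eq_tsum (summable_pow_size_mul_leafWeight hx0.le hx hy)
  have hrec : P x y = x + 2 * x * y * P x y +
      2 * x * y * P x y * ((1 - 2 * x - Real.sqrt (1 - 4 * x)) / (2 * x)) := by
    rw [← tsum_pow_size hx0 hx, hP]
    exact tsum_pow_size_mul_leafWeight hx0.le hx hy
  refine ⟨hrec, ?_⟩
  have hsqrt_pos : 0 < Real.sqrt (1 - 4 * x) := Real.sqrt_pos.2 (by linarith)
  have hsqrt_le : Real.sqrt (1 - 4 * x) ≤ 1 := Real.sqrt_le_one.2 (by linarith)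
  have hden : 0 < 1 - y + y * Real.sqrt (1 - 4 * x) := by
    nlinarith [mul_le_mul_of_nonneg_right (abs_le.1 hy).2 (sub_nonneg.2 hsqrt_le)]
  have hcancel : 2 * x * ((1 - 2 * x - Real.sqrt (1 - 4 * x)) / (2 * x))
      = 1 - 2 * x - Real.sqrt (1 - 4 * x) := mul_div_cancel₀ _ (by positivity)
  rw [eq_div_iff hden.ne']
  linear_combination hrec + y * P x y * hcancel
end
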